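/- arXiv:1709.00519 — 2 statements merged into one kernel-verified Lean document; each statement's English description precedes it below -/
import Mathlib

section
/- Let r ≥ 1 and n ≥ 1. For each i = 1,…,n let W_•^i be a complete flag of subspaces 0 ⊊ W_1^i ⊊ W_2^i ⊊ ⋯ ⊊ W_{r-1}^i ⊊ ℂ^r with dim_ℂ W_j^i = j. Let Stab be the subgroup of SL_r(ℂ) consisting of all A such that A(W_j^i) = W_j^i for every i and j (where A acts on a subspace by taking its image). If Stab is finite, then every element of Stab is a scalar matrix ζ·I_r with ζ^r = 1; consequently Stab is isomorphic to the group of r-th roots of unity in ℂ. -/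
/-!
If a matrix `M` leaves every subspace invariant and is not scalar, then so does each `1 - t • M`,
and `t ↦ det (1 - t • M)` is a nonzero polynomial, so infinitely many of them are invertible.
Rescaling those to determinant one (possible over an algebraically closed field) gives infinitely
many distinct elements of the stabiliser, as `1` and `M` are linearly independent. So a finite
stabiliser consists of scalars and is the centre of `SL_r(ℂ)`, i.e. the `r`-th roots of unity.
-/

open Polynomial

namespace Matrix

variable {n K : Type*} [Fintype n] [DecidableEq n] [Field K]

theorem eval_charpolyRev_eq_det (M : Matrix n n K) (t : K) :
    M.charpolyRev.eval t = (1 - t • M).det := by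
  rw [charpolyRev, ← coe_evalRingHom, RingHom.map_det]
  congr 1
  ext i j
  by_cases h : i = j <;> simp [h] <;> ring

theorem infinite_setOf_det_one_sub_smul_ne_zero [Infinite K] (M : Matrix n n K) :
    {t : K | (1 - t • M).det ≠ 0}.Infinite := by
  have hq : M.charpolyRev ≠ 0 := fun h => by simpa [h] using M.eval_charpolyRev
  refine (Polynomial.finite_setOfPred_isRoot hq).infinite_compl.mono fun t ht => ?_
  simpa [← eval_charpolyRev_eq_det] using ht

theorem eq_of_smul_one_sub_smul_eq [Nonempty n] {M : Matrix n n K} (hM : ∀ a : K, a • 1 ≠ M)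
    {c d s t : K} (hc : c ≠ 0) (h : c • (1 - s • M) = d • (1 - t • M)) : s = t := by
  have hind := (LinearIndependent.pair_iff' (one_ne_zero (α := Matrix n n K))).2 hM
  obtain ⟨hcd, hst⟩ := LinearIndependent.pair_iff.1 hind (c - d) (d * t - c * s) (by
    rw [← sub_eq_zero.2 h]
    module)
  rw [sub_eq_zero] at hcd
  subst hcd
  exact mul_left_cancel₀ hc (sub_eq_zero.1 hst).symm

theorem exists_smul_one_eq_of_finite [Nonempty n] [IsAlgClosed K] (S : Submodule K (Matrix n n K))
    (hS : 1 ∈ S) (hfin : {B | B ∈ S ∧ B.det = 1}.Finite) {M : Matrix n n K} (hM : M ∈ S) :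
    ∃ a : K, a • 1 = M := by
  by_contra! hns
  choose c hc using fun t : K =>
    IsAlgClosed.exists_pow_nat_eq ((1 - t • M).det)⁻¹ (Fintype.card_pos (α := n))
  refine Set.infinite_of_injOn_mapsTo (f := fun t => c t • (1 - t • M))
    (t := {B | B ∈ S ∧ B.det = 1}) (fun s hs t _ hst => ?_) (fun t ht => ⟨?_, ?_⟩)
    (infinite_setOf_det_one_sub_smul_ne_zero M) hfin
  · exact eq_of_smul_one_sub_smul_eq hns (ne_zero_pow Fintype.card_ne_zero
      (hc s ▸ inv_ne_zero hs)) hst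
  · exact S.smul_mem _ (S.sub_mem hS (S.smul_mem _ hM))
  · rw [det_smul, hc, inv_mul_cancel₀ ht]

theorem SpecialLinearGroup.eq_center_of_finite [Nonempty n] [IsAlgClosed K]
    (S : Submodule K (Matrix n n K)) (hS : 1 ∈ S) (G : Subgroup (Matrix.SpecialLinearGroup n K))
    (hG : ∀ A, A ∈ G ↔ (A : Matrix n n K) ∈ S) [Finite G] :
    G = Subgroup.center (Matrix.SpecialLinearGroup n K) := by
  have hfin : {B | B ∈ S ∧ B.det = 1}.Finite :=
    (Set.finite_range fun A : G => (A : Matrix n n K)).subset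
      fun B ⟨hB, hdet⟩ => ⟨⟨⟨B, hdet⟩, (hG _).2 hB⟩, rfl⟩
  ext A
  rw [SpecialLinearGroup.mem_center_iff, hG]
  constructor
  · intro hA
    obtain ⟨a, ha⟩ := exists_smul_one_eq_of_finite S hS hfin hA
    have hdet := A.2
    rw [← ha, det_smul, det_one, mul_one] at hdet
    exact ⟨a, hdet, by rw [← ha, smul_one_eq_diagonal, scalar_apply]⟩
  · rintro ⟨a, -, ha⟩
    rw [← ha, scalar_apply, ← smul_one_eq_diagonal]
    exact S.smul_mem a hS

def stabilizerSubmodule (𝒲 : Set (Submodule K (n → K))) : Submodule K (Matrix n n K) where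
  carrier := {B | ∀ V ∈ 𝒲, ∀ v ∈ V, B *ᵥ v ∈ V}
  add_mem' hB hC V hV v hv := by
    rw [add_mulVec]; exact V.add_mem (hB V hV v hv) (hC V hV v hv)
  zero_mem' V _ v _ := by rw [zero_mulVec]; exact V.zero_mem
  smul_mem' a B hB V hV v hv := by rw [smul_mulVec]; exact V.smul_mem a (hB V hV v hv)

theorem one_mem_stabilizerSubmodule (𝒲 : Set (Submodule K (n → K))) :
    1 ∈ stabilizerSubmodule 𝒲 := fun _ _ v hv => by rwa [one_mulVec]

theorem SpecialLinearGroup.coe_mem_stabilizerSubmodule_iff (𝒲 : Set (Submodule K (n → K)))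
    (A : Matrix.SpecialLinearGroup n K) :
    (A : Matrix n n K) ∈ stabilizerSubmodule 𝒲 ↔
      ∀ V ∈ 𝒲, V.map (Matrix.toLin' (A : Matrix n n K)) = V := by
  refine ⟨fun hA V hV => ?_, fun hA V hV v hv => ?_⟩
  · have hle : V.map (Matrix.toLin' (A : Matrix n n K)) ≤ V := by
      rintro _ ⟨v, hv, rfl⟩
      exact hA V hV v hv
    refine Submodule.eq_of_le_of_finrank_eq hle ?_
    rw [← SpecialLinearGroup.toLin'_to_linearMap]
    exact LinearEquiv.finrank_map_eq _ V
  · rw [← hA V hV]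
    exact ⟨v, hv, Matrix.toLin'_apply _ v⟩

end Matrix

theorem stmt_0_general (r n : ℕ) (hr : 1 ≤ r)
    (W : Fin n → ℕ → Submodule ℂ (Fin r → ℂ))
    (Stab : Subgroup (Matrix.SpecialLinearGroup (Fin r) ℂ))
    (hStab : ∀ A : Matrix.SpecialLinearGroup (Fin r) ℂ,
      A ∈ Stab ↔ ∀ i : Fin n, ∀ j, 1 ≤ j → j ≤ r - 1 →
        (W i j).map (Matrix.toLin' (A : Matrix (Fin r) (Fin r) ℂ)) = W i j)
    (hfin : Finite Stab) :
    (∀ A ∈ Stab, ∃ ζ : ℂ, ζ ^ r = 1 ∧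
      (A : Matrix (Fin r) (Fin r) ℂ) = ζ • (1 : Matrix (Fin r) (Fin r) ℂ)) ∧
    Nonempty (Stab ≃* rootsOfUnity r ℂ) := by
  have : Nonempty (Fin r) := ⟨⟨0, hr⟩⟩
  have hcenter : Stab = Subgroup.center (Matrix.SpecialLinearGroup (Fin r) ℂ) :=
    Matrix.SpecialLinearGroup.eq_center_of_finite (Matrix.stabilizerSubmodule
      {V | ∃ i j, 1 ≤ j ∧ j ≤ r - 1 ∧ W i j = V}) (Matrix.one_mem_stabilizerSubmodule _) Stab
      fun A => by
        rw [hStab, Matrix.SpecialLinearGroup.coe_mem_stabilizerSubmodule_iff]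
        aesop
  refine ⟨fun A hA => ?_, ⟨(MulEquiv.subgroupCongr hcenter).trans
    ((Matrix.SpecialLinearGroup.center_equiv_rootsOfUnity' ⟨0, hr⟩).trans
      (MulEquiv.subgroupCongr (by rw [Fintype.card_fin])))⟩⟩
  obtain ⟨ζ, hζ, hA⟩ := Matrix.SpecialLinearGroup.mem_center_iff.1 (hcenter ▸ hA)
  refine ⟨ζ, by simpa using hζ, ?_⟩
  rw [← hA, Matrix.scalar_apply, Matrix.smul_one_eq_diagonal]

/-- Lemma 5.2: if the stabilizer in `SL_r(ℂ)` of an `n`-tuple of complete flags of `ℂ^r`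
is finite, then every element of it is a scalar matrix `ζ • 1` with `ζ^r = 1`, and the
stabilizer is isomorphic to the group of `r`-th roots of unity. -/
theorem stmt_0 (r n : ℕ) (hr : 1 ≤ r) (hn : 1 ≤ n)
    (W : Fin n → ℕ → Submodule ℂ (Fin r → ℂ))
    (hmono : ∀ i : Fin n, ∀ j, j < r → W i j ≤ W i (j + 1))
    (hdim : ∀ i : Fin n, ∀ j, j ≤ r → Module.finrank ℂ (W i j) = j)
    (Stab : Subgroup (Matrix.SpecialLinearGroup (Fin r) ℂ))
    (hStab : ∀ A : Matrix.SpecialLinearGroup (Fin r) ℂ,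
      A ∈ Stab ↔ ∀ i : Fin n, ∀ j, 1 ≤ j → j ≤ r - 1 →
        (W i j).map (Matrix.toLin' (A : Matrix (Fin r) (Fin r) ℂ)) = W i j)
    (hfin : Finite Stab) :
    (∀ A ∈ Stab, ∃ ζ : ℂ, ζ ^ r = 1 ∧
      (A : Matrix (Fin r) (Fin r) ℂ) = ζ • (1 : Matrix (Fin r) (Fin r) ℂ)) ∧
    Nonempty (Stab ≃* rootsOfUnity r ℂ) :=
  stmt_0_general r n hr W Stab hStab hfin
end

section
/- Let r ≥ 4, n ≥ 1, and 2 ≤ s ≤ r−2 be integers, and let a_j^i (1 ≤ i ≤ n, 1 ≤ j ≤ r−1) be real numbers with 1 > a_1^i > a_2^i > ⋯ > a_{r-1}^i > 0 for each i. Put |a| = Σ_{i=1}^n Σ_{j=1}^{r-1} a_j^i. Then it is impossible that both (1/(s+1))·Σ_{i=1}^{n} Σ_{j=1}^{s} a_j^i < |a|/r and Σ_{i=1}^{n} a_s^i < |a|/r hold. (Indeed Σ_{i=1}^n (Σ_{j=1}^{s-1} a_j^i + (r−s)·a_s^i) > |a| by strict monotonicity, whereas the two displayed inequalities, with weights s+1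 and r−s−1, would force this quantity to be strictly less than |a|.) -/
/-- Arithmetic core of the lemma in Section 4.2: for a parabolic weight
`1 > a_1^i > ⋯ > a_{r-1}^i > 0` with `2 ≤ s ≤ r−2`, it is impossible that both
`(1/(s+1))·∑_i ∑_{j=1}^{s} a_j^i < |a|/r` and `∑_i a_s^i < |a|/r` hold. -/
theorem stmt_5 (r n s : ℕ) (hr : 4 ≤ r) (hn : 1 ≤ n) (hs1 : 2 ≤ s) (hs2 : s ≤ r - 2)
    (a : Fin n → ℕ → ℝ)
    (h1 : ∀ i, a i 1 < 1)
    (hdec : ∀ i, ∀ j, 1 ≤ j → j ≤ r - 2 → a i (j + 1) < a i j)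
    (hpos : ∀ i, 0 < a i (r - 1)) :
    ¬ ((1 / ((s : ℝ) + 1)) * ∑ i, ∑ j ∈ Finset.Icc 1 s, a i j
          < (∑ i, ∑ j ∈ Finset.Icc 1 (r - 1), a i j) / (r : ℝ)
        ∧ (∑ i, a i s) < (∑ i, ∑ j ∈ Finset.Icc 1 (r - 1), a i j) / (r : ℝ)) := by
  rintro ⟨hA, hB⟩
  have : Nonempty (Fin n) := ⟨⟨0, by omega⟩⟩
  -- strict monotonicity
  have hmono : ∀ i, ∀ j : ℕ, 1 ≤ j → ∀ k, j < k → k ≤ r - 1 → a i k < a i j := by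
    intro i j h1j k
    induction k with
    | zero => intro h _; omega
    | succ m ih =>
      intro hjk hk
      rcases eq_or_lt_of_le (Nat.lt_succ_iff.mp hjk) with h | h
      · subst h; exact hdec i j h1j (by omega)
      · exact lt_trans (hdec i m (by omega) (by omega)) (ih h (by omega))
  -- per-row bound on the tail
  have hsum : ∀ i, ∑ j ∈ Finset.Ioc s (r - 1), a i j
      < ((r - 1 - s : ℕ) : ℝ) * a i s := by
    intro i
    have hne : (Finset.Ioc s (r - 1)).Nonempty := by
      rw [Finset.nonempty_Ioc]; omega
    calc ∑ j ∈ Finset.Ioc s (r - 1), a i j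
        < ∑ _j ∈ Finset.Ioc s (r - 1), a i s := by
          apply Finset.sum_lt_sum_of_nonempty hne
          intro j hj
          rw [Finset.mem_Ioc] at hj
          exact hmono i s (by omega) j hj.1 hj.2
      _ = _ := by rw [Finset.sum_const, Nat.card_Ioc, nsmul_eq_mul]
  have hIcc : ∀ x : ℕ, Finset.Icc 1 x = Finset.Ioc 0 x := by
    intro x; ext y; simp [Finset.mem_Icc, Finset.mem_Ioc]; omega
  have hsplit : ∀ i : Fin n, ∑ j ∈ Finset.Icc 1 (r - 1), a i j
      = ∑ j ∈ Finset.Icc 1 s, a i j + ∑ j ∈ Finset.Ioc s (r - 1), a i j := by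
    intro i
    rw [hIcc, hIcc, Finset.sum_Ioc_consecutive (fun j => a i j) (Nat.zero_le s) (by omega)]
  set S1 := ∑ i, ∑ j ∈ Finset.Icc 1 s, a i j with hS1def
  set S2 := ∑ i, a i s with hS2def
  set A := ∑ i, ∑ j ∈ Finset.Icc 1 (r - 1), a i j with hAdef
  set T : ℝ := ((r - 1 - s : ℕ) : ℝ) with hTdef
  have hTpos : (0 : ℝ) < T := by
    rw [hTdef]; exact_mod_cast (show 0 < r - 1 - s by omega)
  have hrpos : (0 : ℝ) < r := by exact_mod_cast (show 0 < r by omega)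
  have hc : T + (s : ℝ) + 1 = (r : ℝ) := by
    rw [hTdef]
    have : (r - 1 - s) + s + 1 = r := by omega
    exact_mod_cast this
  -- A < S1 + T * S2
  have hAeq : A = S1 + ∑ i, ∑ j ∈ Finset.Ioc s (r - 1), a i j := by
    rw [hAdef, hS1def, ← Finset.sum_add_distrib]
    exact Finset.sum_congr rfl fun i _ => hsplit i
  have htail : ∑ i, ∑ j ∈ Finset.Ioc s (r - 1), a i j < T * S2 := by
    rw [hS2def, Finset.mul_sum]
    exact Finset.sum_lt_sum_of_nonempty Finset.univ_nonempty fun i _ => hsum i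
  have hAlt : A < S1 + T * S2 := by rw [hAeq]; linarith
  -- from hA : (1/(s+1)) * S1 < A / r
  have hspos : (0 : ℝ) < (s : ℝ) + 1 := by positivity
  have hS1lt : S1 < ((s : ℝ) + 1) * (A / r) := by
    have h := mul_lt_mul_of_pos_left hA hspos
    rwa [← mul_assoc, mul_one_div_cancel (ne_of_gt hspos), one_mul] at h
  have hTS2 : T * S2 < T * (A / r) := mul_lt_mul_of_pos_left hB hTpos
  have hfinal : A < A := by
    calc A < ((s : ℝ) + 1) * (A / r) + T * (A / r) := by linarith
      _ = (T + (s : ℝ) + 1) * (A / r) := by ring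
      _ = (r : ℝ) * (A / r) := by rw [hc]
      _ = A := by field_simp
  exact lt_irrefl A hfinal
end
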